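/- Let f : ℝ → ℍ be a differentiable curve with ‖f(v)‖ = 1, ‖f'(v)‖ = 1 and ⟨f'(v), i·f(v)⟩ = 0 for all v, and let γ : ℝ → ℍ² be a unit-speed Legendre curve in S⁷. Set F(u,v) = f(v)·γ(u). Then for all u, v ∈ ℝ the partial derivatives satisfy ⟨∂ᵤF(u,v), ∂ᵥF(u,v)⟩ = 0 and ⟨∂ᵤF(u,v), i·∂ᵥF(u,v)⟩ = 0. -/

import Mathlib

open scoped InnerProductSpace Quaternion

/-- `ℍ²` with the real inner product `⟨x, y⟩ = Re (conj x₁ * y₁) + Re (conj x₂ * y₂)`. -/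
abbrev H2 := PiLp 2 (fun _ : Fin 2 => ℍ[ℝ])

/-- The quaternion imaginary unit `i`. -/
def qi : ℍ[ℝ] := ⟨0, 1, 0, 0⟩
/-- The quaternion imaginary unit `j`. -/
def qj : ℍ[ℝ] := ⟨0, 0, 1, 0⟩
/-- The quaternion imaginary unit `k`. -/
def qk : ℍ[ℝ] := ⟨0, 0, 0, 1⟩

/-- Componentwise left multiplication of a vector of `ℍ²` by a quaternion. -/
noncomputable def qmul (q : ℍ[ℝ]) (x : H2) : H2 := WithLp.toLp 2 (fun n => q * x n)

@[simp] lemma qi_re : qi.re = 0 := rfl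
@[simp] lemma qi_imI : qi.imI = 1 := rfl
@[simp] lemma qi_imJ : qi.imJ = 0 := rfl
@[simp] lemma qi_imK : qi.imK = 0 := rfl
@[simp] lemma qj_re : qj.re = 0 := rfl
@[simp] lemma qj_imI : qj.imI = 0 := rfl
@[simp] lemma qj_imJ : qj.imJ = 1 := rfl
@[simp] lemma qj_imK : qj.imK = 0 := rfl
@[simp] lemma qk_re : qk.re = 0 := rfl
@[simp] lemma qk_imI : qk.imI = 0 := rfl
@[simp] lemma qk_imJ : qk.imJ = 0 := rfl
@[simp] lemma qk_imK : qk.imK = 1 := rfl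
@[simp] lemma qmul_apply (q : ℍ[ℝ]) (x : H2) (n : Fin 2) : qmul q x n = q * x n := rfl

/-- Left multiplication by a fixed quaternion, as a continuous linear map on `H2`. -/
noncomputable def qmulL (q : ℍ[ℝ]) : H2 →L[ℝ] H2 :=
  LinearMap.toContinuousLinearMap
    { toFun := fun x => qmul q x
      map_add' := fun x y => PiLp.ext fun n => by
        simp [qmul, mul_add]
      map_smul' := fun c x => PiLp.ext fun n => by
        simp [qmul, mul_smul_comm] }

/-- Multiplication against a fixed vector, as a continuous linear map `ℍ → H2`. -/
noncomputable def qmulR (x : H2) : ℍ[ℝ] →L[ℝ] H2 :=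
  LinearMap.toContinuousLinearMap
    { toFun := fun q => qmul q x
      map_add' := fun p q => PiLp.ext fun n => by
        simp [qmul, add_mul]
      map_smul' := fun c q => PiLp.ext fun n => by
        simp [qmul, smul_mul_assoc] }

lemma hasDerivAt_qmul_left (q : ℍ[ℝ]) {g : ℝ → H2} {g' : H2} {t : ℝ}
    (h : HasDerivAt g g' t) : HasDerivAt (fun s => qmul q (g s)) (qmul q g') t := by
  have := (qmulL q).hasFDerivAt.comp_hasDerivAt t h
  simpa [qmulL, LinearMap.coe_toContinuousLinearMap', Function.comp_def] using this

lemma hasDerivAt_qmul_right (x : H2) {g : ℝ → ℍ[ℝ]} {g' : ℍ[ℝ]} {t : ℝ}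
    (h : HasDerivAt g g' t) : HasDerivAt (fun s => qmul (g s) x) (qmul g' x) t := by
  have := (qmulR x).hasFDerivAt.comp_hasDerivAt t h
  simpa [qmulR, LinearMap.coe_toContinuousLinearMap', Function.comp_def] using this

/-- Let `f : ℝ → ℍ` be a differentiable curve with `‖f v‖ = 1`,
`‖f' v‖ = 1` and `⟨f' v, i * f v⟩ = 0` for all `v`, and let `γ : ℝ → ℍ²` be a
unit-speed Legendre curve in `S⁷`.  Set `F(u,v) = f(v) γ(u)`.  Then for all `u, v`
the partial derivatives satisfy `⟨∂ᵤF, ∂ᵥF⟩ = 0` and `⟨∂ᵤF, i • ∂ᵥF⟩ = 0`. -/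
theorem stmt_8 (f : ℝ → ℍ[ℝ]) (hf : Differentiable ℝ f)
    (hf1 : ∀ v, ‖f v‖ = 1) (hf2 : ∀ v, ‖deriv f v‖ = 1)
    (hfleg : ∀ v, ⟪deriv f v, qi * f v⟫_ℝ = 0)
    (γ : ℝ → H2) (hγ : ContDiff ℝ (⊤ : ℕ∞) γ)
    (hγ1 : ∀ t, ‖γ t‖ = 1) (hγ2 : ∀ t, ‖deriv γ t‖ = 1)
    (hγi : ∀ t, ⟪deriv γ t, qmul qi (γ t)⟫_ℝ = 0)
    (hγj : ∀ t, ⟪deriv γ t, qmul qj (γ t)⟫_ℝ = 0)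
    (hγk : ∀ t, ⟪deriv γ t, qmul qk (γ t)⟫_ℝ = 0)
    (F : ℝ → ℝ → H2) (hF : ∀ u v, F u v = qmul (f v) (γ u)) (u v : ℝ) :
    ⟪deriv (fun u' => F u' v) u, deriv (fun v' => F u v') v⟫_ℝ = 0 ∧
    ⟪deriv (fun u' => F u' v) u, qmul qi (deriv (fun v' => F u v') v)⟫_ℝ = 0 := by
  have hdu : deriv (fun u' => F u' v) u = qmul (f v) (deriv γ u) := by
    have he : (fun u' => F u' v) = fun u' => qmul (f v) (γ u') := funext fun u' => hF u' v
    rw [he]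
    exact (hasDerivAt_qmul_left (f v) ((hγ.differentiable (by simp) u).hasDerivAt)).deriv
  have hdv : deriv (fun v' => F u v') v = qmul (deriv f v) (γ u) := by
    have he : (fun v' => F u v') = fun v' => qmul (f v') (γ u) := funext fun v' => hF u v'
    rw [he]
    exact (hasDerivAt_qmul_right (γ u) ((hf v).hasDerivAt)).deriv
  have hba : ⟪deriv f v, f v⟫_ℝ = 0 := by
    have h2 : HasDerivAt (fun t => ⟪f t, f t⟫_ℝ)
        (⟪f v, deriv f v⟫_ℝ + ⟪deriv f v, f v⟫_ℝ) v :=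
      HasDerivAt.inner ℝ (hf v).hasDerivAt (hf v).hasDerivAt
    have h3 : (fun t => ⟪f t, f t⟫_ℝ) = fun _ => (1 : ℝ) := funext fun t => by
      rw [real_inner_self_eq_norm_mul_norm, hf1, one_mul]
    rw [h3] at h2
    have h4 : ⟪f v, deriv f v⟫_ℝ + ⟪deriv f v, f v⟫_ℝ = 0 :=
      ((hasDerivAt_const v (1 : ℝ)).unique h2).symm
    have h5 := real_inner_comm (f v) (deriv f v)
    linarith
  rw [hdu, hdv]
  have hgi := hγi u
  have hgj := hγj u
  have hgk := hγk u
  have hbi := hfleg v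
  set a := f v with hav
  set b := deriv f v with hbv
  set x := γ u with hxu
  set y := deriv γ u with hyu
  simp only [PiLp.inner_apply, Fin.sum_univ_two, qmul_apply, Quaternion.inner_def,
    Quaternion.re_mul, Quaternion.imI_mul, Quaternion.imJ_mul, Quaternion.imK_mul,
    Quaternion.re_star, Quaternion.imI_star, Quaternion.imJ_star, Quaternion.imK_star,
    qi_re, qi_imI, qi_imJ, qi_imK, qj_re, qj_imI, qj_imJ, qj_imK,
    qk_re, qk_imI, qk_imJ, qk_imK] at hgi hgj hgk hbi hba ⊢
  constructor
  · linear_combination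
      ((y 0).re * (x 0).re + (y 0).imI * (x 0).imI + (y 0).imJ * (x 0).imJ
        + (y 0).imK * (x 0).imK + (y 1).re * (x 1).re + (y 1).imI * (x 1).imI
        + (y 1).imJ * (x 1).imJ + (y 1).imK * (x 1).imK) * hba
      - (-a.re * b.imI + a.imI * b.re + a.imJ * b.imK - a.imK * b.imJ) * hgi
      - (-a.re * b.imJ - a.imI * b.imK + a.imJ * b.re + a.imK * b.imI) * hgj
      - (-a.re * b.imK + a.imI * b.imJ - a.imJ * b.imI + a.imK * b.re) * hgk
  · linear_combination
      (-((y 0).re * (x 0).re + (y 0).imI * (x 0).imI + (y 0).imJ * (x 0).imJ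
        + (y 0).imK * (x 0).imK + (y 1).re * (x 1).re + (y 1).imI * (x 1).imI
        + (y 1).imJ * (x 1).imJ + (y 1).imK * (x 1).imK)) * hbi
      + (a.re * b.re + a.imI * b.imI - a.imJ * b.imJ - a.imK * b.imK) * hgi
      + (-a.re * b.imK + a.imI * b.imJ + a.imJ * b.imI - a.imK * b.re) * hgj
      + (a.re * b.imJ + a.imI * b.imK + a.imJ * b.re + a.imK * b.imI) * hgk
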